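/- arXiv:2312.16459 — 4 statements merged into one kernel-verified Lean document; each statement's English description precedes it below -/
import Mathlib

section
/- Let α and β be positive weight sequences with lim_{k→∞} α(k+1)/α(k) = 1 and lim_{k→∞} β(k+1)/β(k) = 1, and suppose lim_{k→∞} α(k)/(k·β(k)) = 0. Then Ker σ_{M_{α,z}*, M_{β,z}*} ∩ Ran σ_{M_{α,z}*, M_{β,z}*} = {0}; that is, if a bounded operator Y : H²_β → H²_α satisfies M_{α,z}* Y = Y M_{β,z}* and Y = M_{α,z}* X − X M_{β,z}* for some bounded operator X : H²_β → H²_α, then Y = 0. -/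
open Complex Metric Filter ComplexConjugate
open scoped Topology ENNReal

noncomputable section

/-- The `ℓ²` model of a weighted Hardy space: a vector `x` represents the holomorphic
function on the unit disk with Taylor coefficients `x k / α k`. -/
abbrev H2 : Type := lp (fun _ : ℕ => ℂ) 2

/-- Standing assumption (1.1) on a weight sequence: positivity and
`α (k+1)/α k → 1`. -/
def GoodWeight (α : ℕ → ℝ) : Prop :=
  (∀ k, 0 < α k) ∧ Tendsto (fun k => α (k + 1) / α k) atTop (𝓝 1)

/-- The `k`-th Taylor coefficient of `f` at `0`. -/
def tcoeff (f : ℂ → ℂ) (k : ℕ) : ℂ := iteratedDeriv k f 0 / (Nat.factorial k : ℂ)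

/-- `f` belongs to the weighted Hardy space `H²_α`. -/
def MemHardy (α : ℕ → ℝ) (f : ℂ → ℂ) : Prop :=
  DifferentiableOn ℂ f (ball (0 : ℂ) 1) ∧
    Summable fun k => ‖tcoeff f k‖ ^ 2 * α k ^ 2

/-- The holomorphic function on the unit disk represented by the model vector `x ∈ ℓ²`
(in the model of `H²_α`), namely the one with Taylor coefficients `x k / α k`. -/
def rep (α : ℕ → ℝ) (x : H2) : ℂ → ℂ :=
  fun z => ∑' k, (x k / (α k : ℂ)) * z ^ k

/-- `h` is a multiplier from `H²_α` to `H²_β`. -/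
def IsMult (α β : ℕ → ℝ) (h : ℂ → ℂ) : Prop :=
  DifferentiableOn ℂ h (ball (0 : ℂ) 1) ∧
    ∀ f, MemHardy α f → MemHardy β fun z => h z * f z

/-- `X` is (the `ℓ²` model of) the multiplication operator `M_{α,β,h} : H²_α → H²_β`. -/
def IsMultOp (α β : ℕ → ℝ) (h : ℂ → ℂ) (X : H2 →L[ℂ] H2) : Prop :=
  ∀ x : H2, ∀ z ∈ ball (0 : ℂ) 1, rep β (X x) z = h z * rep α x z

/-- The model of the direct sum `H²_α ⊕ H²_β`. -/
abbrev H2sq : Type := WithLp 2 (H2 × H2)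

def prodL : H2sq ≃L[ℂ] H2 × H2 := WithLp.prodContinuousLinearEquiv 2 ℂ H2 H2

/-- The block operator `[[A, B], [0, D]]` on `H²_α ⊕ H²_β`. -/
def blockOp (A B D : H2 →L[ℂ] H2) : H2sq →L[ℂ] H2sq :=
  (prodL.symm : (H2 × H2) →L[ℂ] H2sq).comp <|
    (((A.comp (ContinuousLinearMap.fst ℂ H2 H2) +
        B.comp (ContinuousLinearMap.snd ℂ H2 H2)).prod
      (D.comp (ContinuousLinearMap.snd ℂ H2 H2))).comp
        (prodL : H2sq →L[ℂ] H2 × H2))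

/-- The operator `T_{α,β,h} = [[M_{α,z}*, M_{α,β,h}*], [0, M_{β,z}*]]`, given the three
multiplication operators. -/
def Tabh (Mza Mzb Mh : H2 →L[ℂ] H2) : H2sq →L[ℂ] H2sq :=
  blockOp (ContinuousLinearMap.adjoint Mza) (ContinuousLinearMap.adjoint Mh)
    (ContinuousLinearMap.adjoint Mzb)

/-- Similarity of bounded operators (possibly on different spaces). -/
def OpSimilar {E F : Type*} [NormedAddCommGroup E] [NormedSpace ℂ E]
    [NormedAddCommGroup F] [NormedSpace ℂ F]
    (T : E →L[ℂ] E) (S : F →L[ℂ] F) : Prop :=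
  ∃ X : E ≃L[ℂ] F, (X : E →L[ℂ] F).comp T = S.comp (X : E →L[ℂ] F)

/-- The direct sum `⊕ T i` of a finite family of operators, acting on the
(Hilbertian) direct sum of `n` copies of `E`. -/
def dsumFam {E : Type*} [NormedAddCommGroup E] [NormedSpace ℂ E] (n : ℕ)
    (T : Fin n → (E →L[ℂ] E)) :
    PiLp 2 (fun _ : Fin n => E) →L[ℂ] PiLp 2 (fun _ : Fin n => E) :=
  (((PiLp.continuousLinearEquiv 2 ℂ (fun _ : Fin n => E)).symm :
      (∀ _ : Fin n, E) →L[ℂ] PiLp 2 (fun _ : Fin n => E)).comp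
    (ContinuousLinearMap.pi fun i => (T i).comp (ContinuousLinearMap.proj i))).comp
      ((PiLp.continuousLinearEquiv 2 ℂ (fun _ : Fin n => E)) :
        PiLp 2 (fun _ : Fin n => E) →L[ℂ] (∀ _ : Fin n, E))

/-- The direct sum of `n` copies of an operator. -/
def dsum {E : Type*} [NormedAddCommGroup E] [NormedSpace ℂ E] (n : ℕ) (T : E →L[ℂ] E) :
    PiLp 2 (fun _ : Fin n => E) →L[ℂ] PiLp 2 (fun _ : Fin n => E) :=
  dsumFam n fun _ => T

/-- The value `B(T)` of the (Riesz) functional calculus of `T` at the finite Blaschke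
product `B(z) = e^{iθ} ∏ⱼ (z - a j)/(1 - conj (a j) z)`; since every pole of `B` lies
outside the closed unit disk (which contains `σ(T)`), this is given algebraically by
`e^{iθ} ∏ⱼ (T - a j) (1 - conj (a j) T)⁻¹`. -/
def bCalc {E : Type*} [NormedAddCommGroup E] [NormedSpace ℂ E] {n : ℕ}
    (θ : ℝ) (a : Fin n → ℂ) (T : E →L[ℂ] E) : E →L[ℂ] E :=
  Complex.exp (θ * Complex.I) •
    (List.ofFn fun j =>
      (T - a j • (1 : E →L[ℂ] E)) * Ring.inverse (1 - conj (a j) • T)).prod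

/-- `B(T)` is similar to the direct sum of `n` copies of `T`, for every finite Blaschke
product `B` of every order `n ≥ 1`. -/
def BlaschkeSimilar {E : Type*} [NormedAddCommGroup E] [NormedSpace ℂ E]
    (T : E →L[ℂ] E) : Prop :=
  ∀ (n : ℕ), 1 ≤ n → ∀ (θ : ℝ) (a : Fin n → ℂ), (∀ j, a j ∈ ball (0 : ℂ) 1) →
    OpSimilar (bCalc θ a T) (dsum n T)

/-- `T` is weakly homogeneous: `σ(T) ⊆ 𝔻̄` and `φ(T) ∼ T` for every automorphism `φ`
of the unit disk. -/
def WeaklyHomogeneous {E : Type*} [NormedAddCommGroup E] [NormedSpace ℂ E]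
    (T : E →L[ℂ] E) : Prop :=
  spectrum ℂ T ⊆ closedBall (0 : ℂ) 1 ∧
    ∀ (θ : ℝ), ∀ a ∈ ball (0 : ℂ) 1, OpSimilar (bCalc θ (fun _ : Fin 1 => a) T) T

/-- The Möbius transformation `z ↦ e^{iθ} (z - a)/(1 - conj a · z)` of the disk. -/
def moebius (θ : ℝ) (a : ℂ) (z : ℂ) : ℂ :=
  Complex.exp (θ * Complex.I) * (z - a) / (1 - conj a * z)

/-- The weighted Hardy space `H²_α` is Möbius invariant. -/
def MoebiusInvariant (α : ℕ → ℝ) : Prop :=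
  ∀ (θ : ℝ), ∀ a ∈ ball (0 : ℂ) 1, ∀ f, MemHardy α f →
    MemHardy α fun z => f (moebius θ a z)

/-- `h ∈ Hol(𝔻̄)`: `h` is holomorphic on some open neighborhood of the closed unit
disk. -/
def HolClosedDisk (h : ℂ → ℂ) : Prop :=
  ∃ U : Set ℂ, IsOpen U ∧ closedBall (0 : ℂ) 1 ⊆ U ∧ DifferentiableOn ℂ h U

/-- `H²_α` has property A for the positive integer `n`. -/
def PropertyA (α : ℕ → ℝ) (n : ℕ) : Prop :=
  ∃ c₁ > (0 : ℝ), ∃ c₂ > (0 : ℝ), ∀ j < n, ∀ k : ℕ,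
    α k ≤ c₁ * α (j + k * n) ∧ α (j + k * n) ≤ c₂ * α k

/-- `T` is strongly irreducible: the only idempotents commuting with `T` are `0`, `1`. -/
def StronglyIrreducible {E : Type*} [NormedAddCommGroup E] [NormedSpace ℂ E]
    (T : E →L[ℂ] E) : Prop :=
  ∀ P : E →L[ℂ] E, P * P = P → P * T = T * P → P = 0 ∨ P = 1

/-!
Write `A = M_{α,z}*` and `B = M_{β,z}*`. If `AY = YB` and `Y = AX - XB`, then by induction
`A^{n+1} X - X B^{n+1} = (n+1) Y B^n`. In the standard basis `(eₖ)` of the `ℓ²` model both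
adjoints are weighted backward shifts, so evaluating this identity at `e_{k+n}` in the `j`-th
coordinate gives `(n+1) ⟨Y eₖ, eⱼ⟩ = O(α(j+n+1) / β(k+n)) + O(1)`, and the right-hand side is
`o(n)` because `α(m) = o(m β(m))` and `β(m+d)/β(m) → 1`. Hence every matrix entry of `Y`
vanishes.
-/

namespace WeightedHardy

def unitVec (k : ℕ) : H2 := lp.single 2 k 1

theorem GoodWeight.summable_pow_div {α : ℕ → ℝ} (hα : GoodWeight α) {r : ℝ} (hr₀ : 0 < r)
    (hr₁ : r < 1) : Summable fun k => r ^ k / α k := by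
  refine summable_of_ratio_test_tendsto_lt_one hr₁
    (Eventually.of_forall fun k => (div_pos (pow_pos hr₀ k) (hα.1 k)).ne') ?_
  have hlim : Tendsto (fun k => r * (α (k + 1) / α k)⁻¹) atTop (𝓝 r) := by
    simpa using (hα.2.inv₀ one_ne_zero).const_mul r
  refine hlim.congr fun k => ?_
  have := hα.1 k
  have := hα.1 (k + 1)
  rw [Real.norm_of_nonneg (by positivity), Real.norm_of_nonneg (by positivity)]
  field_simp
  ring

theorem hasFPowerSeriesAt_rep {α : ℕ → ℝ} (hα : GoodWeight α) (x : H2) :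
    HasFPowerSeriesAt (rep α x)
      (FormalMultilinearSeries.ofScalars ℂ fun k => x k / (α k : ℂ)) 0 := by
  set p := FormalMultilinearSeries.ofScalars ℂ fun k => x k / (α k : ℂ)
  have hsum : Summable fun k => ‖p k‖ * ((1 / 2 : NNReal) : ℝ) ^ k := by
    refine ((GoodWeight.summable_pow_div hα (r := 1 / 2) (by norm_num) (by norm_num)).mul_left
      ‖x‖).of_nonneg_of_le (fun k => by positivity) fun k => ?_
    have hxk := lp.norm_apply_le_norm two_ne_zero x k
    have := hα.1 k
    rw [FormalMultilinearSeries.ofScalars_norm, norm_div, Complex.norm_real,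
      Real.norm_of_nonneg this.le]
    calc ‖x k‖ / α k * ((1 / 2 : NNReal) : ℝ) ^ k = ‖x k‖ * ((1 / 2) ^ k / α k) := by
          push_cast; ring
      _ ≤ ‖x‖ * ((1 / 2) ^ k / α k) := by gcongr
  have hpos : 0 < p.radius :=
    lt_of_lt_of_le (by norm_num) (p.le_radius_of_summable_norm hsum)
  have hrep : p.sum = rep α x := funext fun z => by
    change FormalMultilinearSeries.ofScalarsSum _ z = _
    simp only [rep, FormalMultilinearSeries.ofScalars_sum_eq, smul_eq_mul]
  exact hrep ▸ (p.hasFPowerSeriesOnBall hpos).hasFPowerSeriesAt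

theorem eq_of_rep_eventuallyEq {α : ℕ → ℝ} (hα : GoodWeight α) {x y : H2}
    (h : rep α x =ᶠ[𝓝 0] rep α y) : x = y := by
  have hc := FormalMultilinearSeries.ofScalars_series_injective ℂ ℂ <|
    (hasFPowerSeriesAt_rep hα x).eq_formalMultilinearSeries_of_eventually
      (hasFPowerSeriesAt_rep hα y) h
  ext k
  exact (div_left_inj' (Complex.ofReal_ne_zero.mpr (hα.1 k).ne')).mp (congr_fun hc k)

theorem rep_single (α : ℕ → ℝ) (j : ℕ) (c : ℂ) :
    rep α (lp.single 2 j c) = fun z => c / α j * z ^ j := funext fun z => by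
  rw [rep, tsum_eq_single j fun k hk => by simp [hk],
    lp.single_apply_self]

theorem IsMultOp.apply_unitVec {α : ℕ → ℝ} (hα : GoodWeight α) {M : H2 →L[ℂ] H2}
    (hM : IsMultOp α α (fun z => z) M) (j : ℕ) :
    M (unitVec j) = lp.single 2 (j + 1) ((α (j + 1) / α j : ℝ) : ℂ) := by
  refine eq_of_rep_eventuallyEq hα <| eventually_of_mem (ball_mem_nhds 0 one_pos) fun z hz => ?_
  have : (α j : ℂ) ≠ 0 := Complex.ofReal_ne_zero.mpr (hα.1 j).ne'
  have : (α (j + 1) : ℂ) ≠ 0 := Complex.ofReal_ne_zero.mpr (hα.1 (j + 1)).ne'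
  rw [hM _ z hz, unitVec, rep_single, rep_single]
  push_cast
  field_simp
  ring

def IsBackwardShift (w : ℕ → ℝ) (T : H2 →L[ℂ] H2) : Prop :=
  ∀ v j, T v j = ((w (j + 1) / w j : ℝ) : ℂ) * v (j + 1)

theorem IsMultOp.isBackwardShift_adjoint {α : ℕ → ℝ} (hα : GoodWeight α) {M : H2 →L[ℂ] H2}
    (hM : IsMultOp α α (fun z => z) M) : IsBackwardShift α (ContinuousLinearMap.adjoint M) := by
  intro v j
  have hcoord : ∀ (w : H2) (i : ℕ), w i = inner ℂ (unitVec i) w := fun w i => by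
    simp [unitVec, lp.inner_single_left]
  rw [hcoord, ContinuousLinearMap.adjoint_inner_right, IsMultOp.apply_unitVec hα hM,
    lp.inner_single_left, RCLike.inner_apply, Complex.conj_ofReal, mul_comm]

namespace IsBackwardShift

variable {w : ℕ → ℝ} {T : H2 →L[ℂ] H2}

theorem pow_apply (hT : IsBackwardShift w T) (hw : ∀ k, w k ≠ 0) (n : ℕ) (v : H2) (j : ℕ) :
    (T ^ n) v j = ((w (j + n) / w j : ℝ) : ℂ) * v (j + n) := by
  induction n generalizing v with
  | zero => simp [hw j]
  | succ n ih =>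
    rw [pow_succ, ContinuousLinearMap.mul_def, ContinuousLinearMap.comp_apply, ih, hT, ← mul_assoc,
      ← Complex.ofReal_mul, mul_comm (w (j + n) / w j), div_mul_div_cancel₀ (hw (j + n))]
    rfl

theorem pow_apply_unitVec (hT : IsBackwardShift w T) (hw : ∀ k, w k ≠ 0) (n k : ℕ) :
    (T ^ n) (unitVec (k + n)) = ((w (k + n) / w k : ℝ) : ℂ) • unitVec k := by
  ext j
  rw [pow_apply hT hw, lp.coeFn_smul, Pi.smul_apply, smul_eq_mul]
  rcases eq_or_ne j k with rfl | hjk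
  · simp [unitVec]
  · simp [unitVec, hjk]

end IsBackwardShift

theorem pow_succ_mul_sub_mul_pow_succ {R : Type*} [Ring R] {A B X Y : R}
    (hK : A * Y = Y * B) (hR : Y = A * X - X * B) (n : ℕ) :
    A ^ (n + 1) * X - X * B ^ (n + 1) = (n + 1) • (Y * B ^ n) := by
  induction n with
  | zero => simp [hR]
  | succ n ih =>
    calc A ^ (n + 1 + 1) * X - X * B ^ (n + 1 + 1)
        = A * (A ^ (n + 1) * X - X * B ^ (n + 1)) + (A * X - X * B) * B ^ (n + 1) := by
          rw [pow_succ' A (n + 1), pow_succ' B (n + 1)]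
          noncomm_ring
      _ = (n + 1) • (A * Y * B ^ n) + Y * B ^ (n + 1) := by
          rw [ih, ← hR, mul_smul_comm, mul_assoc]
      _ = (n + 1 + 1) • (Y * B ^ (n + 1)) := by
          rw [hK, mul_assoc, ← pow_succ', succ_nsmul _ (n + 1)]

theorem GoodWeight.tendsto_div_add {β : ℕ → ℝ} (hβ : GoodWeight β) (d : ℕ) :
    Tendsto (fun n => β (n + d) / β n) atTop (𝓝 1) := by
  induction d with
  | zero => simp [fun n => (hβ.1 n).ne']
  | succ d ih =>
    have := (hβ.2.comp (tendsto_add_atTop_nat d)).mul ih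
    rw [one_mul] at this
    refine this.congr fun n => ?_
    have := (hβ.1 (n + d)).ne'
    simp only [Function.comp_apply]
    rw [div_mul_div_cancel₀ this, add_assoc]

theorem GoodWeight.tendsto_shift_div_mul_shift {α β : ℕ → ℝ} (hβ : GoodWeight β)
    (hlim : Tendsto (fun k : ℕ => α k / ((k : ℝ) * β k)) atTop (𝓝 0)) (a b : ℕ) :
    Tendsto (fun n : ℕ => α (a + n) / ((n + 1) * β (b + n))) atTop (𝓝 0) := by
  have hshift : Tendsto (fun n => α (n + a) / (((n + a : ℕ) : ℝ) * β (n + a))) atTop (𝓝 0) :=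
    hlim.comp (tendsto_add_atTop_nat a)
  have hfrac : Tendsto (fun n : ℕ => ((a : ℝ) + 1 * n) / (1 + 1 * n)) atTop (𝓝 1) := by
    simpa using tendsto_add_mul_div_add_mul_atTop_nhds (a : ℝ) 1 1 one_ne_zero
  have hβ' := (GoodWeight.tendsto_div_add hβ a).div (GoodWeight.tendsto_div_add hβ b) one_ne_zero
  have := (hshift.mul hfrac).mul hβ'
  rw [zero_mul, zero_mul] at this
  refine this.congr' <| (eventually_ne_atTop 0).mono fun n hn => ?_
  have : ((n + a : ℕ) : ℝ) ≠ 0 := by positivity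
  have := (hβ.1 n).ne'
  have := (hβ.1 (n + a)).ne'
  have := (hβ.1 (n + b)).ne'
  simp only [Pi.div_apply]
  rw [add_comm a n, add_comm b n]
  push_cast at *
  field_simp
  ring

theorem eq_zero_of_add_one_mul_norm_le {E : Type*} [NormedAddCommGroup E] {y : E} {b : ℕ → ℝ}
    (hb : Tendsto (fun n : ℕ => b n / (n + 1)) atTop (𝓝 0))
    (h : ∀ n : ℕ, (n + 1) * ‖y‖ ≤ b n) : y = 0 :=
  norm_le_zero_iff.mp <| ge_of_tendsto' hb fun n =>
    (le_div_iff₀' (by positivity)).mpr (h n)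

theorem IsBackwardShift.pow_identity_apply_unitVec {α β : ℕ → ℝ} (hα : ∀ k, α k ≠ 0)
    (hβ : ∀ k, β k ≠ 0) {A B X Y : H2 →L[ℂ] H2} (hA : IsBackwardShift α A)
    (hB : IsBackwardShift β B) (hK : A * Y = Y * B) (hR : Y = A * X - X * B) (k j n : ℕ) :
    (((n : ℂ) + 1) * Y (unitVec k) j + X (B (unitVec k)) j) * ((β (k + n) / β k : ℝ) : ℂ)
      = ((α (j + (n + 1)) / α j : ℝ) : ℂ) * X (unitVec (k + n)) (j + (n + 1)) := by
  have h := congrArg (fun T : H2 →L[ℂ] H2 => T (unitVec (k + n)) j)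
    (pow_succ_mul_sub_mul_pow_succ hK hR n)
  rw [pow_succ' B n] at h
  simp only [sub_apply, ContinuousLinearMap.mul_def, ContinuousLinearMap.comp_apply, smul_apply,
    hA.pow_apply hα, hB.pow_apply_unitVec hβ, map_smul, lp.coeFn_sub, lp.coeFn_smul,
    Pi.sub_apply, Pi.smul_apply, smul_eq_mul, ← Nat.cast_smul_eq_nsmul ℂ, Nat.cast_add,
    Nat.cast_one] at h
  linear_combination -h

theorem IsBackwardShift.apply_unitVec_apply_eq_zero {α β : ℕ → ℝ} (hα : ∀ k, 0 < α k)
    (hβ : GoodWeight β) (hlim : Tendsto (fun k : ℕ => α k / ((k : ℝ) * β k)) atTop (𝓝 0))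
    {A B X Y : H2 →L[ℂ] H2} (hA : IsBackwardShift α A) (hB : IsBackwardShift β B)
    (hK : A * Y = Y * B) (hR : Y = A * X - X * B) (k j : ℕ) : Y (unitVec k) j = 0 := by
  set y := Y (unitVec k) j
  set z := X (B (unitVec k)) j
  have hbound : ∀ n : ℕ,
      (n + 1) * ‖y‖ ≤ ‖X‖ * β k / α j * (α (j + 1 + n) / β (k + n)) + ‖z‖ := by
    intro n
    have hc : 0 < β (k + n) / β k := div_pos (hβ.1 _) (hβ.1 _)
    have hXe : ‖X (unitVec (k + n)) (j + (n + 1))‖ ≤ ‖X‖ :=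
      (lp.norm_apply_le_norm two_ne_zero _ _).trans
        ((X.le_opNorm _).trans_eq (by simp [unitVec]))
    have hsum : ‖((n : ℂ) + 1) * y + z‖ * (β (k + n) / β k) ≤ α (j + 1 + n) / α j * ‖X‖ := by
      have := congrArg norm <| hA.pow_identity_apply_unitVec (fun k => (hα k).ne')
        (fun k => (hβ.1 k).ne') hB hK hR k j n
      rw [norm_mul, norm_mul, Complex.norm_real, Complex.norm_real, Real.norm_of_nonneg hc.le,
        Real.norm_of_nonneg (div_pos (hα _) (hα _)).le] at this
      rw [this, show j + 1 + n = j + (n + 1) by ring]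
      gcongr
      exact (div_pos (hα _) (hα _)).le
    calc (n + 1) * ‖y‖ = ‖((n : ℂ) + 1) * y + z - z‖ := by
          rw [add_sub_cancel_right, norm_mul]
          norm_cast
      _ ≤ ‖((n : ℂ) + 1) * y + z‖ + ‖z‖ := norm_sub_le _ _
      _ ≤ α (j + 1 + n) / α j * ‖X‖ / (β (k + n) / β k) + ‖z‖ := by
        gcongr
        exact (le_div_iff₀ hc).mpr hsum
      _ = ‖X‖ * β k / α j * (α (j + 1 + n) / β (k + n)) + ‖z‖ := by
        have := (hα j).ne'
        have := (hβ.1 k).ne'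
        have := (hβ.1 (k + n)).ne'
        field_simp
  refine eq_zero_of_add_one_mul_norm_le ?_ hbound
  have := ((GoodWeight.tendsto_shift_div_mul_shift hβ hlim (j + 1) k).const_mul
    (‖X‖ * β k / α j)).add (tendsto_one_div_add_atTop_nhds_zero_nat.const_mul ‖z‖)
  rw [mul_zero, mul_zero, add_zero] at this
  refine this.congr fun n => ?_
  field_simp

theorem IsBackwardShift.eq_zero_of_intertwining_of_eq_sub {α β : ℕ → ℝ} (hα : ∀ k, 0 < α k)
    (hβ : GoodWeight β) (hlim : Tendsto (fun k : ℕ => α k / ((k : ℝ) * β k)) atTop (𝓝 0))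
    {A B X Y : H2 →L[ℂ] H2} (hA : IsBackwardShift α A) (hB : IsBackwardShift β B)
    (hK : A * Y = Y * B) (hR : Y = A * X - X * B) : Y = 0 := by
  refine lp.ext_continuousLinearMap ENNReal.ofNat_ne_top fun k => ?_
  ext j
  exact hA.apply_unitVec_apply_eq_zero hα hβ hlim hB hK hR k j

end WeightedHardy

open WeightedHardy in
theorem stmt_1 (α β : ℕ → ℝ) (hα : GoodWeight α) (hβ : GoodWeight β)
    (hlim : Tendsto (fun k : ℕ => α k / ((k : ℝ) * β k)) atTop (𝓝 0))
    (Mza Mzb : H2 →L[ℂ] H2)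
    (hMza : IsMultOp α α (fun z => z) Mza)
    (hMzb : IsMultOp β β (fun z => z) Mzb)
    (Y X : H2 →L[ℂ] H2)
    (hKer : (ContinuousLinearMap.adjoint Mza).comp Y
      = Y.comp (ContinuousLinearMap.adjoint Mzb))
    (hRan : Y = (ContinuousLinearMap.adjoint Mza).comp X
      - X.comp (ContinuousLinearMap.adjoint Mzb)) :
    Y = 0 := by
  simp only [← ContinuousLinearMap.mul_def] at hKer hRan
  exact IsBackwardShift.eq_zero_of_intertwining_of_eq_sub hα.1 hβ hlim
    (IsMultOp.isBackwardShift_adjoint hα hMza) (IsMultOp.isBackwardShift_adjoint hβ hMzb) hKer hRan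
end
end

section
/- Let α be a positive weight sequence with lim_{k→∞} α(k+1)/α(k) = 1 such that H²_α has property A for a positive integer n. For j = 0,1,…,n−1, let H_{α,j} be the closed linear span in H²_α of {z^{j+kn} : k ≥ 0}. Then for each j = 0,1,…,n−1, the map X_{α,j} : H²_α → H_{α,j} sending f = Σ_{k≥0} f̂(k) z^k to Σ_{k≥0} f̂(k) z^{j+kn} is a bounded, invertible linear operator, and M_{α,z^n}|_{H_{α,j}} ∘ X_{α,j} = X_{α,j} ∘ M_{α,z}. Consequently, the operator M_{α,z^n} = (M_{α,z})^n on H²_α is similar to the direct sum of n copies of M_{α,z}. -/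
open Complex Metric Filter ComplexConjugate
open scoped Topology ENNReal

noncomputable section

/-- The closed subspace of (the model of) `H²_α` spanned by `{z^(j+kn) : k ≥ 0}`:
vectors supported on indices of the form `j + k*n`. -/
def resSubspace (j n : ℕ) : Submodule ℂ H2 where
  carrier := {x : H2 | ∀ m : ℕ, (¬ ∃ k : ℕ, m = j + k * n) → x m = 0}
  add_mem' := by
    intro x y hx hy m hm
    have : (↑(x + y) : ∀ _ : ℕ, ℂ) m = (↑x : ∀ _ : ℕ, ℂ) m + (↑y : ∀ _ : ℕ, ℂ) m := by
      simp [lp.coeFn_add]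
    simp only [Set.mem_setOf_eq] at hx hy
    rw [this, hx m hm, hy m hm, add_zero]
  zero_mem' := by
    intro m _
    have : (↑(0 : H2) : ∀ _ : ℕ, ℂ) m = 0 := by simp [lp.coeFn_zero]
    exact this
  smul_mem' := by
    intro c x hx m hm
    have : (↑(c • x) : ∀ _ : ℕ, ℂ) m = c • (↑x : ∀ _ : ℕ, ℂ) m := by
      simp [lp.coeFn_smul]
    simp only [Set.mem_setOf_eq] at hx
    rw [this, hx m hm, smul_zero]

/-!
In the `ℓ²` model, comparing Taylor coefficients of `z f` and `f` shows that `M_{α,z}` is the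
weighted shift `(M x) 0 = 0`, `(M x) (k + 1) = (α (k + 1) / α k) x k`, so `M_{α,z^n}` shifts
by `n`. The operator `X_{α,j}` multiplies by `α (j + k n) / α k`, which property A bounds above
and away from zero, and moves index `k` to `j + k n`. It is therefore an isomorphism onto the
vectors supported on the residue class `j mod n`, and shifting by one before it is shifting by
`n` after it. As the residue classes partition `ℕ`, `⊕ⱼ X_{α,j}` is an isomorphism from `n`
copies of `H²_α` onto `H²_α` intertwining `⊕ M_{α,z}` with `M_{α,z^n}`.
-/

open Function

section ReindexLp

variable {ι κ : Type*} {E : Type*} [NormedAddCommGroup E] {p : ℝ≥0∞}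

theorem Memℓp.comp_injective {f : κ → E} (hf : Memℓp f p) (hp : 0 < p.toReal) {e : ι → κ}
    (he : Injective e) : Memℓp (f ∘ e) p :=
  (memℓp_gen_iff hp).2 <| (hf.summable hp).comp_injective he

theorem norm_rpow_extend_zero_of_notMem {f : ι → E} (hp : 0 < p.toReal) {e : ι → κ} {m : κ}
    (hm : m ∉ Set.range e) : ‖extend e f 0 m‖ ^ p.toReal = 0 := by
  rw [extend_apply' _ _ _ hm, Pi.zero_apply, norm_zero, Real.zero_rpow hp.ne']

theorem Memℓp.extend_zero {f : ι → E} (hf : Memℓp f p) (hp : 0 < p.toReal) {e : ι → κ}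
    (he : Injective e) : Memℓp (extend e f 0) p := by
  rw [memℓp_gen_iff hp, ← he.summable_iff fun m hm => norm_rpow_extend_zero_of_notMem hp hm]
  simpa only [comp_def, he.extend_apply] using hf.summable hp

theorem Memℓp.smul_of_bound {𝕜 : Type*} [NormedRing 𝕜] [Module 𝕜 E] [IsBoundedSMul 𝕜 E]
    {f : ι → E} (hf : Memℓp f p) {w : ι → 𝕜} {C : ℝ} (hC : ∀ i, ‖w i‖ ≤ C) :
    Memℓp (fun i => w i • f i) p :=
  (hf.norm.const_mul C).mono fun i =>
    (norm_smul_le (w i) (f i)).trans (mul_le_mul_of_nonneg_right (hC i) (norm_nonneg _))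

namespace lp

variable [Fact (1 ≤ p)] {𝕜 : Type*} [NormedField 𝕜] [NormedSpace 𝕜 E]

theorem norm_comp_le (hp : 0 < p.toReal) {e : ι → κ} (he : Injective e)
    (x : lp (fun _ : κ => E) p) :
    ‖(⟨x ∘ e, (lp.memℓp x).comp_injective hp he⟩ : lp (fun _ : ι => E) p)‖ ≤ ‖x‖ := by
  refine lp.norm_le_of_tsum_le hp (norm_nonneg _) ?_
  rw [lp.norm_rpow_eq_tsum hp]
  exact tsum_comp_le_tsum_of_inj ((lp.memℓp x).summable hp) (fun _ => by positivity) he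

theorem norm_extend_zero (hp : 0 < p.toReal) {e : ι → κ} (he : Injective e)
    (x : lp (fun _ : ι => E) p) :
    ‖(⟨extend e x 0, (lp.memℓp x).extend_zero hp he⟩ : lp (fun _ : κ => E) p)‖ = ‖x‖ := by
  rw [← Real.rpow_left_inj (norm_nonneg _) (norm_nonneg _) hp.ne', lp.norm_rpow_eq_tsum hp,
    lp.norm_rpow_eq_tsum hp, ← he.tsum_eq fun m hm => ?_]
  · simp only [he.extend_apply]
  · by_contra h
    exact hm (norm_rpow_extend_zero_of_notMem hp h)

theorem norm_smul_of_bound_le {w : ι → 𝕜} {C : ℝ} (hC : ∀ i, ‖w i‖ ≤ C)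
    (x : lp (fun _ : ι => E) p) :
    ‖(⟨fun i => w i • x i, (lp.memℓp x).smul_of_bound hC⟩ : lp (fun _ : ι => E) p)‖ ≤
      |C| * ‖x‖ :=
  calc _ ≤ ‖C • lp.toNorm x‖ := lp.norm_mono (zero_lt_one.trans_le Fact.out).ne' fun i => by
          change ‖w i • x i‖ ≤ ‖C • ‖x i‖‖
          rw [norm_smul, norm_smul, norm_norm, Real.norm_eq_abs]
          exact mul_le_mul_of_nonneg_right ((hC i).trans (le_abs_self C)) (norm_nonneg _)
    _ = |C| * ‖x‖ := by rw [norm_smul, Real.norm_eq_abs, lp.norm_toNorm]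

def comapCLM (hp : 0 < p.toReal) {e : ι → κ} (he : Injective e) :
    lp (fun _ : κ => E) p →L[𝕜] lp (fun _ : ι => E) p :=
  LinearMap.mkContinuous
    { toFun := fun x => ⟨x ∘ e, (lp.memℓp x).comp_injective hp he⟩
      map_add' := fun _ _ => rfl
      map_smul' := fun _ _ => rfl }
    1 fun x => (one_mul ‖x‖).symm ▸ norm_comp_le hp he x

def extendCLM (hp : 0 < p.toReal) {e : ι → κ} (he : Injective e) :
    lp (fun _ : ι => E) p →L[𝕜] lp (fun _ : κ => E) p :=
  LinearMap.mkContinuous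
    { toFun := fun x => ⟨extend e x 0, (lp.memℓp x).extend_zero hp he⟩
      map_add' := fun x y => lp.ext <| by
        change extend e (⇑x + ⇑y) 0 = extend e ⇑x 0 + extend e ⇑y 0
        rw [← extend_add, add_zero]
      map_smul' := fun c x => lp.ext <| by
        change extend e (c • ⇑x) 0 = c • extend e ⇑x 0
        rw [← extend_smul, smul_zero] }
    1 fun x => (one_mul ‖x‖).symm ▸ (norm_extend_zero hp he x).le

def diagCLM (w : ι → 𝕜) (hw : ∃ C, ∀ i, ‖w i‖ ≤ C) :
    lp (fun _ : ι => E) p →L[𝕜] lp (fun _ : ι => E) p :=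
  LinearMap.mkContinuousOfExistsBound
    { toFun := fun x => ⟨fun i => w i • x i, (lp.memℓp x).smul_of_bound hw.choose_spec⟩
      map_add' := fun x y => lp.ext <| funext fun i => smul_add (w i) (x i) (y i)
      map_smul' := fun c x => lp.ext <| funext fun i => smul_comm (w i) c (x i) }
    ⟨|hw.choose|, norm_smul_of_bound_le hw.choose_spec⟩

theorem diagCLM_diagCLM {w w' : ι → 𝕜} (hw : ∃ C, ∀ i, ‖w i‖ ≤ C)
    (hw' : ∃ C, ∀ i, ‖w' i‖ ≤ C) (h : ∀ i, w i * w' i = 1) (x : lp (fun _ : ι => E) p) :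
    diagCLM w hw (diagCLM w' hw' x) = x :=
  lp.ext <| funext fun i => by
    change w i • w' i • x i = x i
    rw [smul_smul, h i, one_smul]

variable (hp : 0 < p.toReal) {e : ι → κ} (he : Injective e)

@[simp]
theorem comapCLM_apply (x : lp (fun _ : κ => E) p) (i : ι) :
    comapCLM (𝕜 := 𝕜) hp he x i = x (e i) := rfl

@[simp]
theorem extendCLM_apply_self (x : lp (fun _ : ι => E) p) (i : ι) :
    extendCLM (𝕜 := 𝕜) hp he x (e i) = x i :=
  he.extend_apply _ _ i

theorem extendCLM_apply_of_notMem (x : lp (fun _ : ι => E) p) {m : κ}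
    (hm : m ∉ Set.range e) : extendCLM (𝕜 := 𝕜) hp he x m = 0 :=
  extend_apply' _ _ _ hm

theorem comapCLM_extendCLM (x : lp (fun _ : ι => E) p) :
    comapCLM (𝕜 := 𝕜) hp he (extendCLM (𝕜 := 𝕜) hp he x) = x :=
  lp.ext <| funext fun i => by simp

theorem comapCLM_extendCLM_of_disjoint {e' : ι → κ} (he' : Injective e')
    (hdisj : Disjoint (Set.range e) (Set.range e')) (x : lp (fun _ : ι => E) p) :
    comapCLM (𝕜 := 𝕜) hp he' (extendCLM (𝕜 := 𝕜) hp he x) = 0 :=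
  lp.ext <| funext fun i => by
    rw [comapCLM_apply, extendCLM_apply_of_notMem hp he x
      (hdisj.notMem_of_mem_right (Set.mem_range_self i))]
    rfl

theorem extendCLM_comapCLM {y : lp (fun _ : κ => E) p} (hy : ∀ m ∉ Set.range e, y m = 0) :
    extendCLM (𝕜 := 𝕜) hp he (comapCLM (𝕜 := 𝕜) hp he y) = y :=
  lp.ext <| funext fun m => by
    by_cases hm : m ∈ Set.range e
    · obtain ⟨i, rfl⟩ := hm
      simp
    · rw [extendCLM_apply_of_notMem hp he _ hm, hy m hm]

theorem sum_extendCLM_comapCLM {J : Type*} [Fintype J] {σ : J → ι → κ}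
    (hσ : ∀ j, Injective (σ j)) (hcover : ∀ m, ∃ j, m ∈ Set.range (σ j))
    (hdisj : Pairwise fun j j' => Disjoint (Set.range (σ j)) (Set.range (σ j')))
    (x : lp (fun _ : κ => E) p) :
    ∑ j, extendCLM (𝕜 := 𝕜) hp (hσ j) (comapCLM (𝕜 := 𝕜) hp (hσ j) x) = x :=
  lp.ext <| funext fun m => by
    obtain ⟨j₀, i, rfl⟩ := hcover m
    rw [lp.coeFn_sum, Finset.sum_apply, Finset.sum_eq_single j₀ (fun j _ hj => ?_) (by simp)]
    · simp
    · exact extendCLM_apply_of_notMem hp (hσ j) _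
        ((hdisj hj).notMem_of_mem_right (Set.mem_range_self i))

end lp

end ReindexLp

section WeightedShift

open Asymptotics

theorem eq_of_hasSum_pow_smul {𝕜 : Type*} [NontriviallyNormedField 𝕜] {f : 𝕜 → 𝕜}
    {a b : ℕ → 𝕜} (ha : ∀ᶠ z in 𝓝 0, HasSum (fun k => z ^ k • a k) (f z))
    (hb : ∀ᶠ z in 𝓝 0, HasSum (fun k => z ^ k • b k) (f z)) : a = b := by
  have hpa : HasFPowerSeriesAt f (FormalMultilinearSeries.ofScalars 𝕜 a) 0 :=
    hasFPowerSeriesAt_iff.2 (by simpa [FormalMultilinearSeries.coeff_ofScalars] using ha)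
  have hpb : HasFPowerSeriesAt f (FormalMultilinearSeries.ofScalars 𝕜 b) 0 :=
    hasFPowerSeriesAt_iff.2 (by simpa [FormalMultilinearSeries.coeff_ofScalars] using hb)
  exact FormalMultilinearSeries.ofScalars_series_injective 𝕜 𝕜
    (hpa.eq_formalMultilinearSeries hpb)

variable {α β : ℕ → ℝ}

theorem GoodWeight.isBigO_inv_pow (hα : GoodWeight α) :
    (fun k => (α k)⁻¹) =O[atTop] fun k => (2 : ℝ) ^ k := by
  obtain ⟨N, hN⟩ :=
    (hα.2.eventually (eventually_gt_nhds (by norm_num : (1 / 2 : ℝ) < 1))).exists_forall_of_atTop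
  have hgrowth : ∀ m, α N ≤ 2 ^ m * α (N + m) := by
    intro m
    induction m with
    | zero => simp
    | succ m ih =>
      have h := hN (N + m) (Nat.le_add_right _ _)
      rw [lt_div_iff₀ (hα.1 _)] at h
      calc α N ≤ 2 ^ m * α (N + m) := ih
        _ ≤ 2 ^ m * (2 * α (N + m + 1)) := by gcongr; linarith
        _ = 2 ^ (m + 1) * α (N + (m + 1)) := by rw [← add_assoc]; ring
  refine IsBigO.of_bound (α N)⁻¹ ?_
  filter_upwards [eventually_ge_atTop N] with k hk
  obtain ⟨m, rfl⟩ := Nat.exists_eq_add_of_le hk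
  rw [norm_inv, Real.norm_of_nonneg (hα.1 _).le, Real.norm_of_nonneg (by positivity)]
  calc (α (N + m))⁻¹ ≤ (α N)⁻¹ * 2 ^ m := by
        rw [inv_le_iff_one_le_mul₀ (hα.1 _),
          show (α N)⁻¹ * 2 ^ m * α (N + m) = 2 ^ m * α (N + m) / α N by ring,
          one_le_div (hα.1 N)]
        exact hgrowth m
    _ ≤ (α N)⁻¹ * 2 ^ (N + m) :=
        mul_le_mul_of_nonneg_left (pow_le_pow_right₀ (by norm_num) (by omega))
          (inv_nonneg.2 (hα.1 N).le)

theorem GoodWeight.summable_rep (hα : GoodWeight α) (x : H2) {z : ℂ} (hz : ‖z‖ < 1 / 2) :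
    Summable fun k => x k / (α k : ℂ) * z ^ k := by
  have hgeo : Summable fun k => (2 * ‖z‖) ^ k :=
    summable_geometric_of_lt_one (by positivity) (by linarith)
  have hinv : (fun k => (α k)⁻¹ * ‖z‖ ^ k) =O[atTop] fun k => (2 * ‖z‖) ^ k := by
    simpa [mul_pow] using hα.isBigO_inv_pow.mul (isBigO_refl (fun k => ‖z‖ ^ k) atTop)
  refine summable_of_isBigO_nat hgeo (IsBigO.trans ?_ hinv)
  refine IsBigO.of_bound ‖x‖ (Eventually.of_forall fun k => ?_)
  have hαk := hα.1 k
  rw [norm_mul, norm_div, norm_pow, Complex.norm_real, Real.norm_of_nonneg hαk.le,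
    Real.norm_of_nonneg (by positivity), div_eq_mul_inv, mul_assoc]
  exact mul_le_mul_of_nonneg_right (lp.norm_apply_le_norm two_ne_zero x k) (by positivity)

theorem GoodWeight.hasSum_rep (hα : GoodWeight α) (x : H2) :
    ∀ᶠ z in 𝓝 0, HasSum (fun k => z ^ k • (x k / (α k : ℂ))) (rep α x z) := by
  filter_upwards [ball_mem_nhds (0 : ℂ) (by norm_num : (0 : ℝ) < 1 / 2)] with z hz
  simp_rw [smul_eq_mul, mul_comm (z ^ _)]
  exact (hα.summable_rep x (mem_ball_zero_iff.1 hz)).hasSum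

variable {M : H2 →L[ℂ] H2}

theorem IsMultOp.coeff_eq_shift (hα : GoodWeight α) (hβ : GoodWeight β)
    (hM : IsMultOp α β (fun z => z) M) (x : H2) :
    (fun k => M x k / (β k : ℂ)) = fun | 0 => 0 | k + 1 => x k / (α k : ℂ) := by
  refine eq_of_hasSum_pow_smul (hβ.hasSum_rep (M x)) ?_
  filter_upwards [hα.hasSum_rep x, ball_mem_nhds (0 : ℂ) one_pos] with z hz hz1
  rw [hM x z hz1, ← hasSum_nat_add_iff' 1]
  simpa [pow_succ, mul_assoc, mul_left_comm] using hz.mul_left z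

theorem IsMultOp.apply_zero (hα : GoodWeight α) (hβ : GoodWeight β)
    (hM : IsMultOp α β (fun z => z) M) (x : H2) : M x 0 = 0 := by
  simpa [(hβ.1 0).ne'] using congr_fun (hM.coeff_eq_shift hα hβ x) 0

theorem IsMultOp.coeff_apply_succ (hα : GoodWeight α) (hβ : GoodWeight β)
    (hM : IsMultOp α β (fun z => z) M) (x : H2) (k : ℕ) :
    M x (k + 1) / (β (k + 1) : ℂ) = x k / (α k : ℂ) :=
  congr_fun (hM.coeff_eq_shift hα hβ x) (k + 1)

theorem IsMultOp.coeff_pow_apply_add (hα : GoodWeight α) (hM : IsMultOp α α (fun z => z) M)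
    (s m : ℕ) (x : H2) : (M ^ s) x (m + s) / (α (m + s) : ℂ) = x m / (α m : ℂ) := by
  induction s generalizing x m with
  | zero => rfl
  | succ s ih =>
    rw [pow_succ, mul_apply_eq_comp, ← add_assoc, add_right_comm, ih,
      hM.coeff_apply_succ hα hα]

theorem IsMultOp.pow_apply_of_lt (hα : GoodWeight α) (hM : IsMultOp α α (fun z => z) M)
    {s m : ℕ} (hm : m < s) (x : H2) : (M ^ s) x m = 0 := by
  obtain ⟨t, rfl⟩ := Nat.exists_eq_add_of_lt hm
  have h := hM.coeff_pow_apply_add hα m 0 ((M ^ (t + 1)) x)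
  rw [zero_add, ← mul_apply_eq_comp, ← pow_add, ← add_assoc, pow_succ' M t,
    mul_apply_eq_comp, hM.apply_zero hα hα, zero_div, div_eq_zero_iff] at h
  exact h.resolve_right (Complex.ofReal_ne_zero.2 (hα.1 m).ne')

end WeightedShift

section Spread

variable {n j : ℕ}

theorem residue_injective (hn : 0 < n) (j : ℕ) : Injective fun k => j + k * n :=
  fun _ _ h => Nat.eq_of_mul_eq_mul_right hn (Nat.add_left_cancel h)

theorem mem_range_residue_iff (hj : j < n) {m : ℕ} :
    m ∈ Set.range (fun k => j + k * n) ↔ m % n = j := by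
  constructor
  · rintro ⟨k, rfl⟩
    rw [Nat.add_mul_mod_self_right, Nat.mod_eq_of_lt hj]
  · rintro rfl
    exact ⟨m / n, Nat.mod_add_div' m n⟩

theorem mem_resSubspace_iff {y : H2} :
    y ∈ resSubspace j n ↔ ∀ m ∉ Set.range (fun k => j + k * n), y m = 0 :=
  forall_congr' fun _ => imp_congr_left (not_congr (exists_congr fun _ => eq_comm))

variable {α : ℕ → ℝ}

theorem PropertyA.exists_bound_ratio (hA : PropertyA α n) (hpos : ∀ k, 0 < α k) (hj : j < n) :
    ∃ C, ∀ k, ‖((α (j + k * n) / α k : ℝ) : ℂ)‖ ≤ C := by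
  obtain ⟨_, _, c₂, _, h⟩ := hA
  refine ⟨c₂, fun k => ?_⟩
  rw [Complex.norm_real, Real.norm_of_nonneg (div_pos (hpos _) (hpos _)).le,
    div_le_iff₀ (hpos k)]
  exact (h j hj k).2

theorem PropertyA.exists_bound_ratio_inv (hA : PropertyA α n) (hpos : ∀ k, 0 < α k)
    (hj : j < n) : ∃ C, ∀ k, ‖((α (j + k * n) / α k : ℝ) : ℂ)⁻¹‖ ≤ C := by
  obtain ⟨c₁, _, _, _, h⟩ := hA
  refine ⟨c₁, fun k => ?_⟩
  rw [norm_inv, Complex.norm_real, Real.norm_of_nonneg (div_pos (hpos _) (hpos _)).le, inv_div,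
    div_le_iff₀ (hpos _)]
  exact (h j hj k).1

/-- The model of `X_{α,j}`: since `x ∈ H2` has Taylor coefficients `x k / α k`, the weights
`α (j + k n) / α k` make it send `z ^ k` to `z ^ (j + k n)`. -/
def spreadCLM (hpos : ∀ k, 0 < α k) (hA : PropertyA α n) (hj : j < n) : H2 →L[ℂ] H2 :=
  lp.extendCLM (by norm_num) (residue_injective (Nat.zero_lt_of_lt hj) j) ∘L
    lp.diagCLM (fun k => ((α (j + k * n) / α k : ℝ) : ℂ)) (hA.exists_bound_ratio hpos hj)

def compressCLM (hpos : ∀ k, 0 < α k) (hA : PropertyA α n) (hj : j < n) : H2 →L[ℂ] H2 :=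
  lp.diagCLM (fun k => ((α (j + k * n) / α k : ℝ) : ℂ)⁻¹) (hA.exists_bound_ratio_inv hpos hj) ∘L
    lp.comapCLM (by norm_num) (residue_injective (Nat.zero_lt_of_lt hj) j)

variable (hpos : ∀ k, 0 < α k) (hA : PropertyA α n) (hj : j < n)

theorem spreadCLM_apply_residue (x : H2) (k : ℕ) :
    spreadCLM hpos hA hj x (j + k * n) = ((α (j + k * n) / α k : ℝ) : ℂ) * x k := by
  simp only [spreadCLM, ContinuousLinearMap.comp_apply]
  exact lp.extendCLM_apply_self _ (residue_injective (Nat.zero_lt_of_lt hj) j) _ k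

theorem spreadCLM_coeff (x : H2) (k : ℕ) :
    spreadCLM hpos hA hj x (j + k * n) / (α (j + k * n) : ℂ) = x k / (α k : ℂ) := by
  have h₁ := Complex.ofReal_ne_zero.2 (hpos k).ne'
  have h₂ := Complex.ofReal_ne_zero.2 (hpos (j + k * n)).ne'
  rw [spreadCLM_apply_residue, Complex.ofReal_div]
  field_simp

theorem spreadCLM_apply_of_mod_ne (x : H2) {m : ℕ} (hm : m % n ≠ j) :
    spreadCLM hpos hA hj x m = 0 := by
  simp only [spreadCLM, ContinuousLinearMap.comp_apply]
  exact lp.extendCLM_apply_of_notMem _ _ _ fun h => hm ((mem_range_residue_iff hj).1 h)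

theorem spreadCLM_mem (x : H2) : spreadCLM hpos hA hj x ∈ resSubspace j n :=
  mem_resSubspace_iff.2 fun _ hm => by
    simp only [spreadCLM, ContinuousLinearMap.comp_apply]
    exact lp.extendCLM_apply_of_notMem _ _ _ hm

theorem compressCLM_spreadCLM (x : H2) :
    compressCLM hpos hA hj (spreadCLM hpos hA hj x) = x := by
  simp only [spreadCLM, compressCLM, ContinuousLinearMap.comp_apply]
  rw [lp.comapCLM_extendCLM]
  exact lp.diagCLM_diagCLM _ _
    (fun k => inv_mul_cancel₀ (Complex.ofReal_ne_zero.2 (div_pos (hpos _) (hpos _)).ne')) x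

theorem spreadCLM_compressCLM (y : H2) :
    spreadCLM hpos hA hj (compressCLM hpos hA hj y) =
      lp.extendCLM (𝕜 := ℂ) (by norm_num) (residue_injective (Nat.zero_lt_of_lt hj) j)
        (lp.comapCLM (𝕜 := ℂ) (by norm_num) (residue_injective (Nat.zero_lt_of_lt hj) j) y) := by
  simp only [spreadCLM, compressCLM, ContinuousLinearMap.comp_apply]
  rw [lp.diagCLM_diagCLM _ _
    (fun k => mul_inv_cancel₀ (Complex.ofReal_ne_zero.2 (div_pos (hpos _) (hpos _)).ne'))]

theorem spreadCLM_compressCLM_of_mem {y : H2} (hy : y ∈ resSubspace j n) :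
    spreadCLM hpos hA hj (compressCLM hpos hA hj y) = y := by
  rw [spreadCLM_compressCLM]
  exact lp.extendCLM_comapCLM _ _ (mem_resSubspace_iff.1 hy)

theorem compressCLM_spreadCLM_of_ne {i : ℕ} (hi : i < n) (hij : i ≠ j) (x : H2) :
    compressCLM hpos hA hi (spreadCLM hpos hA hj x) = 0 := by
  simp only [spreadCLM, compressCLM, ContinuousLinearMap.comp_apply]
  rw [lp.comapCLM_extendCLM_of_disjoint, map_zero]
  exact Set.disjoint_left.2 fun m hmj hmi =>
    hij (((mem_range_residue_iff hi).1 hmi).symm.trans ((mem_range_residue_iff hj).1 hmj))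

end Spread

theorem sum_spreadCLM_compressCLM {α : ℕ → ℝ} {n : ℕ} (hpos : ∀ k, 0 < α k)
    (hA : PropertyA α n) (hn : 0 < n) (x : H2) :
    ∑ j : Fin n, spreadCLM hpos hA j.2 (compressCLM hpos hA j.2 x) = x := by
  simp_rw [spreadCLM_compressCLM]
  refine lp.sum_extendCLM_comapCLM _ _ (fun m => ⟨⟨m % n, Nat.mod_lt m hn⟩,
    (mem_range_residue_iff (Nat.mod_lt m hn)).2 rfl⟩) (fun i j hij => ?_) x
  exact Set.disjoint_left.2 fun m hmi hmj => hij (Fin.ext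
    (((mem_range_residue_iff i.2).1 hmi).symm.trans ((mem_range_residue_iff j.2).1 hmj)))

theorem IsMultOp.pow_apply_spreadCLM {α : ℕ → ℝ} {n j : ℕ} {M : H2 →L[ℂ] H2}
    (hM : IsMultOp α α (fun z => z) M) (hα : GoodWeight α) (hA : PropertyA α n) (hj : j < n) (x : H2) :
    (M ^ n) (spreadCLM hα.1 hA hj x) = spreadCLM hα.1 hA hj (M x) := by
  refine lp.ext (funext fun m => ?_)
  rcases lt_or_ge m n with hm | hm
  · rw [hM.pow_apply_of_lt hα hm]
    by_cases hmj : m % n = j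
    · rw [Nat.mod_eq_of_lt hm] at hmj
      subst hmj
      have h := spreadCLM_apply_residue hα.1 hA hj (M x) 0
      rw [zero_mul, add_zero, hM.apply_zero hα hα, mul_zero] at h
      exact h.symm
    · rw [spreadCLM_apply_of_mod_ne _ _ _ _ hmj]
  · obtain ⟨m, rfl⟩ := Nat.exists_eq_add_of_le' hm
    rw [← div_left_inj' (Complex.ofReal_ne_zero.2 (hα.1 (m + n)).ne'),
      hM.coeff_pow_apply_add hα]
    by_cases hmj : m % n = j
    · obtain ⟨k, rfl⟩ : ∃ k, j + k * n = m := (mem_range_residue_iff hj).2 hmj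
      rw [spreadCLM_coeff, show j + k * n + n = j + (k + 1) * n by ring, spreadCLM_coeff,
        hM.coeff_apply_succ hα hα]
    · rw [spreadCLM_apply_of_mod_ne _ _ _ _ hmj,
        spreadCLM_apply_of_mod_ne _ _ _ _ (by rwa [Nat.add_mod_right]), zero_div, zero_div]

theorem OpSimilar.of_comp_eq {E F : Type*} [NormedAddCommGroup E] [NormedSpace ℂ E]
    [NormedAddCommGroup F] [NormedSpace ℂ F] {T : E →L[ℂ] E} {S : F →L[ℂ] F} (U : F ≃L[ℂ] E)
    (h : (U : F →L[ℂ] E).comp S = T.comp (U : F →L[ℂ] E)) : OpSimilar T S := by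
  refine ⟨U.symm, ContinuousLinearMap.ext fun x => U.injective ?_⟩
  simpa using (congr($h (U.symm x))).symm

theorem dsum_apply {E : Type*} [NormedAddCommGroup E] [NormedSpace ℂ E] {n : ℕ} (T : E →L[ℂ] E)
    (f : PiLp 2 (fun _ : Fin n => E)) (j : Fin n) : dsum n T f j = T (f j) := rfl

section Decomposition

variable {α : ℕ → ℝ} {n : ℕ} (hpos : ∀ k, 0 < α k) (hA : PropertyA α n)

def spreadEquiv {j : ℕ} (hj : j < n) : H2 ≃L[ℂ] resSubspace j n :=
  ContinuousLinearEquiv.equivOfInverse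
    ((spreadCLM hpos hA hj).codRestrict _ (spreadCLM_mem hpos hA hj))
    ((compressCLM hpos hA hj).comp (resSubspace j n).subtypeL)
    (compressCLM_spreadCLM hpos hA hj)
    fun y => Subtype.ext (spreadCLM_compressCLM_of_mem hpos hA hj y.2)

def spreadSumEquiv (hn : 0 < n) : PiLp 2 (fun _ : Fin n => H2) ≃L[ℂ] H2 :=
  ContinuousLinearEquiv.equivOfInverse
    (∑ j : Fin n, (spreadCLM hpos hA j.2).comp (PiLp.proj 2 (fun _ : Fin n => H2) j))
    (((PiLp.continuousLinearEquiv 2 ℂ (fun _ : Fin n => H2)).symm :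
        (Fin n → H2) →L[ℂ] PiLp 2 (fun _ : Fin n => H2)).comp
      (ContinuousLinearMap.pi fun j => compressCLM hpos hA j.2))
    (fun f => PiLp.ext fun i => by
      simp only [sum_apply, ContinuousLinearMap.comp_apply, PiLp.proj_apply, map_sum,
        ContinuousLinearMap.coe_pi', ContinuousLinearEquiv.coe_coe,
        PiLp.continuousLinearEquiv_symm_apply, WithLp.ofLp_sum, Finset.sum_apply]
      rw [Finset.sum_eq_single i (fun c _ hc => compressCLM_spreadCLM_of_ne hpos hA c.2 i.2
        (Fin.val_ne_of_ne (Ne.symm hc)) _) (by simp), compressCLM_spreadCLM])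
    fun x => by
      simp only [ContinuousLinearMap.comp_apply, ContinuousLinearMap.coe_pi',
        ContinuousLinearEquiv.coe_coe, PiLp.continuousLinearEquiv_symm_apply, sum_apply,
        PiLp.proj_apply]
      exact sum_spreadCLM_compressCLM hpos hA hn x

theorem spreadSumEquiv_apply (hn : 0 < n) (f : PiLp 2 (fun _ : Fin n => H2)) :
    spreadSumEquiv hpos hA hn f = ∑ j : Fin n, spreadCLM hpos hA j.2 (f j) := by
  simp [spreadSumEquiv]

end Decomposition

theorem stmt_6 (α : ℕ → ℝ) (hα : GoodWeight α) (n : ℕ) (hn : 0 < n)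
    (hA : PropertyA α n)
    (Mza : H2 →L[ℂ] H2) (hMza : IsMultOp α α (fun z => z) Mza) :
    (∀ j < n, ∃ X : H2 ≃L[ℂ] resSubspace j n,
      (∀ x : H2, ∀ k : ℕ,
        ((X x : H2)) (j + k * n) = ((α (j + k * n) / α k : ℝ) : ℂ) * x k) ∧
      ∀ x : H2, (Mza ^ n) ((X x : H2)) = ((X (Mza x) : H2))) ∧
    OpSimilar (Mza ^ n) (dsum n Mza) := by
  refine ⟨fun j hj => ⟨spreadEquiv hα.1 hA hj, spreadCLM_apply_residue hα.1 hA hj,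
    hMza.pow_apply_spreadCLM hα hA hj⟩, ?_⟩
  refine OpSimilar.of_comp_eq (spreadSumEquiv hα.1 hA hn) (ContinuousLinearMap.ext fun f => ?_)
  simp only [ContinuousLinearMap.comp_apply, ContinuousLinearEquiv.coe_coe, spreadSumEquiv_apply,
    map_sum, dsum_apply, hMza.pow_apply_spreadCLM hα hA]
end
end

section
/- Let α be a positive weight sequence with lim_{k→∞} α(k+1)/α(k) = 1 and let n be a positive integer. Then H²_α has property A for n if and only if there exist constants c₁, c₂ > 0 such that c₁ ≤ α(n−1+kn)/α(k) ≤ c₂ for all k ≥ 0. -/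
open Complex Metric Filter ComplexConjugate
open scoped Topology ENNReal

noncomputable section

/-! Since `α (k + 1) / α k → 1`, consecutive weights, and hence weights at any bounded distance,
are comparable. Each index `j + k * n` with `j < n` lies within `n - 1` steps of `n - 1 + k * n`,
so comparability of `α k` with `α (n - 1 + k * n)` transfers to every `j < n`. -/

namespace GoodWeight

variable {α : ℕ → ℝ}

theorem exists_consecutive_le_mul (hα : GoodWeight α) :
    ∃ K ≥ 1, ∀ k, α (k + 1) ≤ K * α k ∧ α k ≤ K * α (k + 1) := by
  obtain ⟨hpos, hlim⟩ := hα
  obtain ⟨B, hB⟩ := hlim.bddAbove_range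
  obtain ⟨B', hB'⟩ := (hlim.inv₀ one_ne_zero).bddAbove_range
  refine ⟨max 1 (max B B'), le_max_left _ _, fun k => ⟨?_, ?_⟩⟩
  · have : α (k + 1) / α k ≤ max 1 (max B B') :=
      (hB ⟨k, rfl⟩).trans ((le_max_left _ _).trans (le_max_right _ _))
    rw [div_le_iff₀ (hpos k)] at this
    linarith
  · have : (α (k + 1) / α k)⁻¹ ≤ max 1 (max B B') :=
      (hB' ⟨k, rfl⟩).trans ((le_max_right _ _).trans (le_max_right _ _))
    rw [inv_div, div_le_iff₀ (hpos (k + 1))] at this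
    linarith

theorem exists_shift_le_mul (hα : GoodWeight α) (D : ℕ) :
    ∃ C > 0, ∀ a, ∀ d ≤ D, α (a + d) ≤ C * α a ∧ α a ≤ C * α (a + d) := by
  obtain ⟨K, hK, hstep⟩ := hα.exists_consecutive_le_mul
  have hK0 : 0 < K := one_pos.trans_le hK
  refine ⟨K ^ D, by positivity, fun a d hd => ⟨?_, ?_⟩⟩
  · calc α (a + d) ≤ K ^ d * α a :=
          le_geom (u := fun i => α (a + i)) hK0.le d fun i _ => (hstep (a + i)).1
      _ ≤ K ^ D * α a := by gcongr; exact (hα.1 a).le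
  · have : (K⁻¹) ^ d * α a ≤ α (a + d) :=
      geom_le (u := fun i => α (a + i)) (inv_nonneg.2 hK0.le) d fun i _ => by
        rw [inv_mul_le_iff₀ hK0]; exact (hstep (a + i)).2
    calc α a ≤ K ^ d * α (a + d) := by
          rwa [inv_pow, inv_mul_le_iff₀ (by positivity)] at this
      _ ≤ K ^ D * α (a + d) := by gcongr; exact (hα.1 _).le

end GoodWeight

theorem PropertyA.exists_ratio_bounds {α : ℕ → ℝ} (hpos : ∀ k, 0 < α k) {n : ℕ} (hn : 0 < n)
    (h : PropertyA α n) : ∃ c₁ > (0 : ℝ), ∃ c₂ > (0 : ℝ), ∀ k : ℕ,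
      c₁ ≤ α (n - 1 + k * n) / α k ∧ α (n - 1 + k * n) / α k ≤ c₂ := by
  obtain ⟨c₁, hc₁, c₂, hc₂, h⟩ := h
  refine ⟨c₁⁻¹, inv_pos.2 hc₁, c₂, hc₂, fun k => ?_⟩
  obtain ⟨hlow, hup⟩ := h (n - 1) (Nat.sub_lt hn one_pos) k
  rw [le_div_iff₀ (hpos k), div_le_iff₀ (hpos k), inv_mul_le_iff₀ hc₁]
  exact ⟨hlow, hup⟩

theorem propertyA_of_ratio_bounds {α : ℕ → ℝ} (hα : GoodWeight α) {n : ℕ}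
    (h : ∃ c₁ > (0 : ℝ), ∃ c₂ > (0 : ℝ), ∀ k : ℕ,
      c₁ ≤ α (n - 1 + k * n) / α k ∧ α (n - 1 + k * n) / α k ≤ c₂) : PropertyA α n := by
  obtain ⟨c₁, hc₁, c₂, hc₂, h⟩ := h
  obtain ⟨C, hC, hshift⟩ := hα.exists_shift_le_mul (n - 1)
  refine ⟨C / c₁, by positivity, C * c₂, by positivity, fun j hj k => ?_⟩
  obtain ⟨hlow, hup⟩ := h k
  rw [le_div_iff₀ (hα.1 k)] at hlow
  rw [div_le_iff₀ (hα.1 k)] at hup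
  have hjn : j + k * n + (n - 1 - j) = n - 1 + k * n := by omega
  obtain ⟨hlast_le, hj_le⟩ := hshift (j + k * n) (n - 1 - j) (Nat.sub_le _ _)
  rw [hjn] at hlast_le hj_le
  constructor
  · calc α k ≤ α (n - 1 + k * n) / c₁ := by rwa [le_div_iff₀ hc₁, mul_comm]
      _ ≤ C * α (j + k * n) / c₁ := by gcongr
      _ = C / c₁ * α (j + k * n) := by ring
  · calc α (j + k * n) ≤ C * α (n - 1 + k * n) := hj_le
      _ ≤ C * (c₂ * α k) := by gcongr
      _ = C * c₂ * α k := by ring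

theorem stmt_7 (α : ℕ → ℝ) (hα : GoodWeight α) (n : ℕ) (hn : 0 < n) :
    PropertyA α n ↔ ∃ c₁ > (0 : ℝ), ∃ c₂ > (0 : ℝ), ∀ k : ℕ,
      c₁ ≤ α (n - 1 + k * n) / α k ∧ α (n - 1 + k * n) / α k ≤ c₂ :=
  ⟨PropertyA.exists_ratio_bounds hα.1 hn, propertyA_of_ratio_bounds hα⟩

end
end

section
/- Let α be a positive weight sequence with α(0) = 1 and lim_{k→∞} α(k+1)/α(k) = 1, such that the weighted Hardy space H²_α is of polynomial growth, i.e. there exists N ∈ ℕ with (k+1)/(k+N+1) ≤ α(k)/α(k−1) ≤ (k+N+1)/(k+1) for all k ≥ 1. Then for every positive integer n, H²_α has property A for n; in fact n^{−N} ≤ α(n−1+kn)/α(k) ≤ n^N for all k ≥ 0. -/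
open Complex Metric Filter ComplexConjugate
open scoped Topology ENNReal

noncomputable section

/-!
Compare `α` with `Q m = (m + 2) (m + 3) ⋯ (m + N + 1)`, whose successive ratios
`Q (m + 1) / Q m = (m + N + 2) / (m + 2)` are exactly the bounds of the growth condition. Hence
`α / Q` is antitone and `α * Q` is monotone, so for `k ≤ m` both `α m / α k` and `α k / α m` are at
most `Q m / Q k`. For `m = j + k n` with `j < n` every factor of `Q m` is at most `n` times the
corresponding factor of `Q k`, so `Q m / Q k ≤ n ^ N`.
-/

theorem Nat.ascFactorial_le_pow_mul_ascFactorial {a b n : ℕ} (hn : 1 ≤ n) (hab : a ≤ n * b)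
    (k : ℕ) : a.ascFactorial k ≤ n ^ k * b.ascFactorial k := by
  induction k with
  | zero => simp
  | succ k ih =>
    have hfactor : a + k ≤ n * (b + k) := by nlinarith
    calc a.ascFactorial (k + 1) = (a + k) * a.ascFactorial k := Nat.ascFactorial_succ
      _ ≤ (n * (b + k)) * (n ^ k * b.ascFactorial k) := Nat.mul_le_mul hfactor ih
      _ = n ^ (k + 1) * b.ascFactorial (k + 1) := by rw [Nat.ascFactorial_succ]; ring

theorem ascFactorial_add_two_pos (N m : ℕ) : (0 : ℝ) < (m + 2).ascFactorial N := by
  exact_mod_cast Nat.ascFactorial_pos (m + 1) N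

theorem ascFactorial_succ_mul (N m : ℕ) :
    ((m + 3).ascFactorial N : ℝ) * (m + 2) = ((m + 2).ascFactorial N : ℝ) * (m + N + 2) := by
  have h : ((m + 2 : ℕ) : ℝ) * ((m + 3).ascFactorial N : ℝ)
      = ((m + 2 + N : ℕ) : ℝ) * ((m + 2).ascFactorial N : ℝ) := by
    exact_mod_cast Nat.succ_ascFactorial (m + 2) N
  push_cast at h
  linarith

section Sandwich

variable {f g : ℕ → ℝ} {k m : ℕ} {c : ℝ}

theorem le_mul_of_antitone_div (hg : ∀ m, 0 < g m) (hf : 0 ≤ f k)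
    (hdiv : Antitone fun m => f m / g m) (hkm : k ≤ m) (hc : g m ≤ c * g k) :
    f m ≤ c * f k :=
  calc f m = f m / g m * g m := (div_mul_cancel₀ _ (hg m).ne').symm
    _ ≤ f k / g k * (c * g k) :=
      mul_le_mul (hdiv hkm) hc (hg m).le (div_nonneg hf (hg k).le)
    _ = c * f k := by field_simp [(hg k).ne']

theorem le_mul_of_monotone_mul (hg : ∀ m, 0 < g m) (hf : 0 ≤ f m)
    (hmul : Monotone fun m => f m * g m) (hkm : k ≤ m) (hc : g m ≤ c * g k) :
    f k ≤ c * f m := by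
  have : f k * g k ≤ c * f m * g k :=
    calc f k * g k ≤ f m * g m := hmul hkm
      _ ≤ f m * (c * g k) := mul_le_mul_of_nonneg_left hc hf
      _ = c * f m * g k := by ring
  exact le_of_mul_le_mul_right this (hg k)

end Sandwich

section PolynomialGrowth

variable {α : ℕ → ℝ} {N : ℕ} (hpos : ∀ k, 0 < α k)
  (hgrow : ∀ k : ℕ, 1 ≤ k →
    ((k : ℝ) + 1) / ((k : ℝ) + N + 1) ≤ α k / α (k - 1) ∧
      α k / α (k - 1) ≤ ((k : ℝ) + N + 1) / ((k : ℝ) + 1))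
include hpos hgrow

theorem succ_mul_le_of_polyGrowth (m : ℕ) : α (m + 1) * (m + 2) ≤ α m * (m + N + 2) := by
  have h := (hgrow (m + 1) m.succ_pos).2
  rw [Nat.add_sub_cancel, div_le_div_iff₀ (hpos m) (by positivity)] at h
  push_cast at h
  linarith

theorem mul_le_succ_of_polyGrowth (m : ℕ) : α m * (m + 2) ≤ α (m + 1) * (m + N + 2) := by
  have h := (hgrow (m + 1) m.succ_pos).1
  rw [Nat.add_sub_cancel, div_le_div_iff₀ (by positivity) (hpos m)] at h
  push_cast at h
  linarith

theorem antitone_div_ascFactorial_of_polyGrowth :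
    Antitone fun m => α m / (m + 2).ascFactorial N := by
  refine antitone_nat_of_succ_le fun m => ?_
  have hQ := ascFactorial_add_two_pos N m
  rw [div_le_div_iff₀ (ascFactorial_add_two_pos N (m + 1)) hQ]
  refine le_of_mul_le_mul_right ?_ (by positivity : (0 : ℝ) < m + 2)
  calc α (m + 1) * (m + 2).ascFactorial N * (m + 2)
      = α (m + 1) * (m + 2) * (m + 2).ascFactorial N := by ring
    _ ≤ α m * (m + N + 2) * (m + 2).ascFactorial N :=
      mul_le_mul_of_nonneg_right (succ_mul_le_of_polyGrowth hpos hgrow m) hQ.le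
    _ = α m * (m + 1 + 2).ascFactorial N * (m + 2) := by
      rw [show m + 1 + 2 = m + 3 by ring]
      linear_combination (-α m) * ascFactorial_succ_mul N m

theorem monotone_mul_ascFactorial_of_polyGrowth :
    Monotone fun m => α m * (m + 2).ascFactorial N := by
  refine monotone_nat_of_le_succ fun m => ?_
  refine le_of_mul_le_mul_right ?_ (by positivity : (0 : ℝ) < m + 2)
  calc α m * (m + 2).ascFactorial N * (m + 2)
      = α m * (m + 2) * (m + 2).ascFactorial N := by ring
    _ ≤ α (m + 1) * (m + N + 2) * (m + 2).ascFactorial N :=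
      mul_le_mul_of_nonneg_right (mul_le_succ_of_polyGrowth hpos hgrow m)
        (ascFactorial_add_two_pos N m).le
    _ = α (m + 1) * (m + 1 + 2).ascFactorial N * (m + 2) := by
      rw [show m + 1 + 2 = m + 3 by ring]
      linear_combination (-α (m + 1)) * ascFactorial_succ_mul N m

theorem pow_mul_bounds_of_polyGrowth {n j : ℕ} (hn : 0 < n) (hj : j < n) (k : ℕ) :
    α k ≤ n ^ N * α (j + k * n) ∧ α (j + k * n) ≤ n ^ N * α k := by
  have hkm : k ≤ j + k * n := le_add_left (Nat.le_mul_of_pos_right k hn)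
  have hQ : ((j + k * n + 2).ascFactorial N : ℝ) ≤ n ^ N * (k + 2).ascFactorial N := by
    exact_mod_cast Nat.ascFactorial_le_pow_mul_ascFactorial hn (by nlinarith) N
  exact ⟨le_mul_of_monotone_mul (ascFactorial_add_two_pos N) (hpos _).le
      (monotone_mul_ascFactorial_of_polyGrowth hpos hgrow) hkm hQ,
    le_mul_of_antitone_div (ascFactorial_add_two_pos N) (hpos k).le
      (antitone_div_ascFactorial_of_polyGrowth hpos hgrow) hkm hQ⟩

end PolynomialGrowth

theorem stmt_9_general (α : ℕ → ℝ) (hpos : ∀ k, 0 < α k)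
    (N : ℕ)
    (hgrow : ∀ k : ℕ, 1 ≤ k →
      ((k : ℝ) + 1) / ((k : ℝ) + N + 1) ≤ α k / α (k - 1) ∧
        α k / α (k - 1) ≤ ((k : ℝ) + N + 1) / ((k : ℝ) + 1))
    (n : ℕ) (hn : 0 < n) :
    PropertyA α n ∧
      ∀ k : ℕ, ((n : ℝ) ^ N)⁻¹ ≤ α (n - 1 + k * n) / α k ∧
        α (n - 1 + k * n) / α k ≤ (n : ℝ) ^ N := by
  have hnN : (0 : ℝ) < (n : ℝ) ^ N := by positivity
  have bounds := fun {j} (hj : j < n) => pow_mul_bounds_of_polyGrowth hpos hgrow hn hj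
  refine ⟨⟨_, hnN, _, hnN, fun j hj k => bounds hj k⟩, fun k => ?_⟩
  obtain ⟨hlower, hupper⟩ := bounds (Nat.sub_one_lt hn.ne') k
  exact ⟨(le_div_iff₀ (hpos k)).2 ((inv_mul_le_iff₀ hnN).2 hlower),
    (div_le_iff₀ (hpos k)).2 hupper⟩

theorem stmt_9 (α : ℕ → ℝ) (hpos : ∀ k, 0 < α k) (h0 : α 0 = 1)
    (hαlim : Tendsto (fun k => α (k + 1) / α k) atTop (𝓝 1))
    (N : ℕ)
    (hgrow : ∀ k : ℕ, 1 ≤ k →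
      ((k : ℝ) + 1) / ((k : ℝ) + N + 1) ≤ α k / α (k - 1) ∧
        α k / α (k - 1) ≤ ((k : ℝ) + N + 1) / ((k : ℝ) + 1))
    (n : ℕ) (hn : 0 < n) :
    PropertyA α n ∧
      ∀ k : ℕ, ((n : ℝ) ^ N)⁻¹ ≤ α (n - 1 + k * n) / α k ∧
        α (n - 1 + k * n) / α k ≤ (n : ℝ) ^ N :=
  stmt_9_general α hpos N hgrow n hn
end
end
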